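/- arXiv:2012.09969 — 4 statements merged into one kernel-verified Lean document; each statement's English description precedes it below -/
import Mathlib

section
/- For all N ≥ 1, Z_{2N,1} · Z_{N,4} = 2^{2N} · Z_{2N,2}, where Z_{N,β} = (2N)^{-βN(N-1)/4 - N/2} (N!)^{-1} β^{-N/2 - βN(N-1)/4} (2π)^{N/2} ∏_{j=1}^N Γ(1+jβ/2)/Γ(1+β/2). -/
open Real Finset

noncomputable def Znorm (N : ℕ) (β : ℝ) : ℝ :=
  ((2 * N : ℝ)) ^ (-(β * N * (N - 1) / 4) - N / 2 : ℝ) * ((N.factorial : ℝ))⁻¹ *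
    β ^ (-(N : ℝ) / 2 - β * N * (N - 1) / 4 : ℝ) * (2 * π) ^ ((N : ℝ) / 2) *
    ∏ j ∈ Finset.Icc 1 N, Real.Gamma (1 + j * β / 2) / Real.Gamma (1 + β / 2)

/-!
Write `Z_{N,β}` as an elementary prefactor (powers of `2N`, `β` and `2π`) times `1 / N!` times
the Gamma product `∏ Γ(1 + jβ/2) / Γ(1 + β/2)`. For `β = 2` and `β = 4` the Gamma product is
`∏ j!` and `∏ (2j)! / 2`. For `β = 1`, Legendre duplication merges the factors `j = 2k - 1, 2k`
into `Γ(k + 1/2) Γ(k + 1) = √π (2k)! / 4^k`. Both sides are then expressed through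
`P = ∏_{k ≤ N} (2k)!`, using `∏_{j ≤ 2N} j! · 2^N N! = P^2`, and the prefactors match by
comparing logarithms.
-/

open scoped Nat

theorem Gamma_add_half_mul_Gamma_add_one_mul_four_pow (k : ℕ) :
    Gamma (k + 1 / 2) * Gamma (k + 1) * 4 ^ k = √π * (2 * k)! := by
  have hdup := Gamma_mul_Gamma_add_half ((k : ℝ) + 1 / 2)
  rw [show (k : ℝ) + 1 / 2 + 1 / 2 = k + 1 by ring,
    show 2 * ((k : ℝ) + 1 / 2) = ((2 * k : ℕ) : ℝ) + 1 by push_cast; ring,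
    show (1 : ℝ) - (((2 * k : ℕ) : ℝ) + 1) = -((2 * k : ℕ) : ℝ) by ring,
    rpow_neg zero_le_two, rpow_natCast, Gamma_nat_eq_factorial (2 * k)] at hdup
  rw [hdup, show (4 : ℝ) ^ k = 2 ^ (2 * k) by rw [pow_mul]; norm_num]
  field_simp

theorem prod_Gamma_one_add_half_mul_two_pow (N : ℕ) :
    (∏ j ∈ Icc 1 (2 * N), Gamma (1 + j / 2)) * 2 ^ (N * (N + 1)) =
      √π ^ N * ∏ k ∈ Icc 1 N, ((2 * k)! : ℝ) := by
  induction N with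
  | zero => simp
  | succ n ih =>
    have hpair := Gamma_add_half_mul_Gamma_add_one_mul_four_pow (n + 1)
    rw [show 2 * (n + 1) = 2 * n + 1 + 1 by ring, prod_Icc_succ_top (by omega),
      prod_Icc_succ_top (by omega), prod_Icc_succ_top (by omega),
      show (n + 1) * (n + 1 + 1) = n * (n + 1) + 2 * (n + 1) by ring, pow_add, pow_mul (2 : ℝ) 2,
      show (1 : ℝ) + ((2 * n + 1 : ℕ) : ℝ) / 2 = (n + 1 : ℕ) + 1 / 2 by push_cast; ring,
      show (1 : ℝ) + ((2 * n + 1 + 1 : ℕ) : ℝ) / 2 = (n + 1 : ℕ) + 1 by push_cast; ring]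
    linear_combination (Gamma (↑(n + 1) + 1 / 2) * Gamma (↑(n + 1) + 1) * 4 ^ (n + 1)) * ih +
      √π ^ n * (∏ k ∈ Icc 1 n, ((2 * k)! : ℝ)) * hpair

theorem prod_Gamma_div_Gamma_beta_one (N : ℕ) :
    ∏ j ∈ Icc 1 (2 * N), Gamma (1 + j * 1 / 2) / Gamma (1 + 1 / 2) =
      2 ^ (2 * N) * (∏ k ∈ Icc 1 N, ((2 * k)! : ℝ)) / (2 ^ (N * (N + 1)) * √π ^ N) := by
  have hGamma : Gamma (1 + 1 / 2) ^ (2 * N) * 2 ^ (2 * N) = √π ^ N * √π ^ N := by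
    rw [show (1 : ℝ) + 1 / 2 = 1 / 2 + 1 by norm_num, Gamma_add_one one_half_pos.ne',
      Gamma_one_half_eq, ← mul_pow, ← pow_add, ← two_mul]
    ring
  rw [prod_div_distrib, prod_const, Nat.card_Icc, Nat.add_sub_cancel,
    div_eq_div_iff (by positivity) (by positivity)]
  simp only [mul_one]
  linear_combination √π ^ N * prod_Gamma_one_add_half_mul_two_pow N -
    (∏ k ∈ Icc 1 N, ((2 * k)! : ℝ)) * hGamma

theorem prod_Gamma_div_Gamma_beta_two (M : ℕ) :
    ∏ j ∈ Icc 1 M, Gamma (1 + j * 2 / 2) / Gamma (1 + 2 / 2) = ∏ j ∈ Icc 1 M, (j ! : ℝ) := by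
  refine prod_congr rfl fun j _ => ?_
  rw [show (1 : ℝ) + j * 2 / 2 = j + 1 by ring, show (1 : ℝ) + 2 / 2 = 2 by norm_num,
    Gamma_nat_eq_factorial, Gamma_two, div_one]

theorem prod_Gamma_div_Gamma_beta_four (M : ℕ) :
    ∏ j ∈ Icc 1 M, Gamma (1 + j * 4 / 2) / Gamma (1 + 4 / 2) =
      (∏ j ∈ Icc 1 M, ((2 * j)! : ℝ)) / 2 ^ M := by
  rw [prod_div_distrib, prod_const, Nat.card_Icc, Nat.add_sub_cancel,
    show (1 : ℝ) + 4 / 2 = (2 : ℕ) + 1 by norm_num, Gamma_nat_eq_factorial]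
  congr 1
  refine prod_congr rfl fun j _ => ?_
  rw [show (1 : ℝ) + j * 4 / 2 = (2 * j : ℕ) + 1 by push_cast; ring, Gamma_nat_eq_factorial]

theorem prod_factorial_Icc_two_mul (N : ℕ) :
    (∏ j ∈ Icc 1 (2 * N), j !) * (2 ^ N * N !) = (∏ k ∈ Icc 1 N, (2 * k)!) ^ 2 := by
  induction N with
  | zero => simp
  | succ n ih =>
    rw [prod_Icc_succ_top (by omega), mul_pow, ← ih, show 2 * (n + 1) = 2 * n + 1 + 1 by ring,
      prod_Icc_succ_top (by omega), prod_Icc_succ_top (by omega), Nat.factorial_succ (2 * n + 1),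
      Nat.factorial_succ n, pow_succ]
    ring

noncomputable def Zprefactor (N : ℕ) (β : ℝ) : ℝ :=
  ((2 * N : ℝ)) ^ (-(β * N * (N - 1) / 4) - N / 2 : ℝ) *
    β ^ (-(N : ℝ) / 2 - β * N * (N - 1) / 4 : ℝ) * (2 * π) ^ ((N : ℝ) / 2)

theorem Znorm_eq_Zprefactor_mul (N : ℕ) (β : ℝ) :
    Znorm N β = Zprefactor N β * (N ! : ℝ)⁻¹ *
      ∏ j ∈ Icc 1 N, Gamma (1 + j * β / 2) / Gamma (1 + β / 2) := by
  unfold Znorm Zprefactor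
  ring

theorem Zprefactor_two_mul_one_mul_Zprefactor_four (N : ℕ) :
    Zprefactor (2 * N) 1 * Zprefactor N 4 =
      Zprefactor (2 * N) 2 * 2 ^ (N * (N + 1)) * √π ^ N := by
  rcases N.eq_zero_or_pos with rfl | hN
  · simp [Zprefactor]
  have hN' : (0 : ℝ) < N := by exact_mod_cast hN
  refine log_injOn_pos (Set.mem_Ioi.2 (by unfold Zprefactor; positivity))
    (Set.mem_Ioi.2 (by unfold Zprefactor; positivity)) ?_
  have hlog4 : log 4 = 2 * log 2 := by
    rw [show (4 : ℝ) = 2 ^ 2 by norm_num, log_pow, Nat.cast_ofNat]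
  unfold Zprefactor
  push_cast
  simp (disch := positivity) only [log_mul, log_rpow, log_pow, log_sqrt, hlog4, log_one]
  push_cast
  ring

theorem stmt0_general (N : ℕ) :
    Znorm (2 * N) 1 * Znorm N 4 = 2 ^ (2 * N) * Znorm (2 * N) 2 := by
  have hfact : (∏ j ∈ Icc 1 (2 * N), (j ! : ℝ)) * (2 ^ N * N !) =
      (∏ k ∈ Icc 1 N, ((2 * k)! : ℝ)) ^ 2 := by
    exact_mod_cast prod_factorial_Icc_two_mul N
  have hpref := Zprefactor_two_mul_one_mul_Zprefactor_four N
  rw [Znorm_eq_Zprefactor_mul, Znorm_eq_Zprefactor_mul, Znorm_eq_Zprefactor_mul,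
    prod_Gamma_div_Gamma_beta_one, prod_Gamma_div_Gamma_beta_two, prod_Gamma_div_Gamma_beta_four]
  field_simp
  linear_combination (∏ k ∈ Icc 1 N, ((2 * k)! : ℝ)) ^ 2 * hpref -
    Zprefactor (2 * N) 2 * 2 ^ (N * (N + 1)) * √π ^ N * hfact

theorem stmt0 (N : ℕ) (hN : 1 ≤ N) :
    Znorm (2 * N) 1 * Znorm N 4 = 2 ^ (2 * N) * Znorm (2 * N) 2 :=
  stmt0_general N
end

section
/- For all N ≥ 1, (∏_{j=1}^{2N} Γ(1+j/2) · ∏_{j=1}^{N} Γ(1+2j)) / ∏_{j=1}^{2N} Γ(1+j) = N! · π^{N/2} · 2^{-N²}. -/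
open Real Finset

/-!
Split `∏_{j ≤ 2N} Γ(1 + j/2)` into the pairs `j = 2k+1, 2k+2`. By Legendre duplication at
`1/2 + (k+1)`, the pair `Γ(k + 3/2) Γ(k + 2)` equals `(2k+2)! · 2^{-(2k+2)} · √π`; against the
denominator pair `(2k+1)! (2k+2)!` and the factor `Γ(1 + 2(k+1)) = (2k+2)!` this leaves
`(k+1) · √π · 2^{-(2k+1)}`, and the product of these over `k < N` is `N! · π^{N/2} · 2^{-N²}`
since the odd numbers below `2N` sum to `N²`.
-/

theorem Finset.prod_Icc_one_eq_prod_range {M : Type*} [CommMonoid M] (f : ℕ → M) (n : ℕ) :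
    ∏ j ∈ Icc 1 n, f j = ∏ k ∈ range n, f (k + 1) := by
  induction n with
  | zero => simp
  | succ n ih => rw [prod_Icc_succ_top (by omega), prod_range_succ, ih]

theorem Finset.prod_Icc_one_two_mul_eq_prod_range {M : Type*} [CommMonoid M] (f : ℕ → M)
    (n : ℕ) :
    ∏ j ∈ Icc 1 (2 * n), f j = ∏ k ∈ range n, f (2 * k + 1) * f (2 * k + 2) := by
  induction n with
  | zero => simp
  | succ n ih =>
    rw [show 2 * (n + 1) = 2 * n + 1 + 1 by ring, prod_Icc_succ_top (by omega),
      prod_Icc_succ_top (by omega), ih, prod_range_succ, mul_assoc]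

theorem Real.Gamma_half_add_half_mul_Gamma_one_add_half {s : ℝ} (hs : s ≠ 0) :
    Gamma (1 / 2 + s / 2) * Gamma (1 + s / 2) = s * Gamma s * 2 ^ (-s) * √π := by
  have h := Gamma_mul_Gamma_add_half (1 / 2 + s / 2)
  rw [show 1 / 2 + s / 2 + 1 / 2 = 1 + s / 2 by ring, show 2 * (1 / 2 + s / 2) = s + 1 by ring,
    show 1 - (s + 1) = -s by ring, Gamma_add_one hs] at h
  exact h

theorem Real.Gamma_half_pair_mul_Gamma_eq (k : ℕ) :
    Gamma (1 + (2 * k + 1 : ℕ) / 2) * Gamma (1 + (2 * k + 2 : ℕ) / 2) *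
        Gamma (1 + 2 * (k + 1 : ℕ)) =
      ((k + 1) * √π * 2 ^ (-(2 * k + 1 : ℝ))) *
        (Gamma (1 + (2 * k + 1 : ℕ)) * Gamma (1 + (2 * k + 2 : ℕ))) := by
  have h := Gamma_half_add_half_mul_Gamma_one_add_half (s := 2 * k + 2) (by positivity)
  have h2 : (2 : ℝ) ^ (-(2 * k + 2 : ℝ)) = 2 ^ (-(2 * k + 1 : ℝ)) / 2 := by
    rw [show -(2 * k + 2 : ℝ) = -(2 * k + 1) - 1 by ring, rpow_sub_one two_ne_zero]
  push_cast
  rw [show (1 : ℝ) + (2 * k + 1) / 2 = 1 / 2 + (2 * k + 2) / 2 by ring, h, h2,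
    show (1 : ℝ) + (2 * k + 1) = 2 * k + 2 by ring,
    show (1 : ℝ) + 2 * (k + 1) = 1 + (2 * k + 2) by ring]
  ring

theorem prod_range_succ_mul_sqrt_pi_mul_two_rpow (N : ℕ) :
    ∏ k ∈ range N, ((k + 1) * √π * (2 : ℝ) ^ (-(2 * k + 1 : ℝ))) =
      N.factorial * π ^ ((N : ℝ) / 2) * 2 ^ (-(N : ℝ) ^ 2) := by
  induction N with
  | zero => simp
  | succ n ih =>
    rw [prod_range_succ, ih, Nat.factorial_succ, sqrt_eq_rpow]
    push_cast
    rw [show ((n : ℝ) + 1) / 2 = n / 2 + 1 / 2 by ring, rpow_add pi_pos,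
      show -((n : ℝ) + 1) ^ 2 = -n ^ 2 + -(2 * n + 1) by ring, rpow_add two_pos]
    ring

theorem stmt1_general (N : ℕ) :
    ((∏ j ∈ Finset.Icc 1 (2 * N), Real.Gamma (1 + j / 2)) *
        ∏ j ∈ Finset.Icc 1 N, Real.Gamma (1 + 2 * j)) /
      (∏ j ∈ Finset.Icc 1 (2 * N), Real.Gamma (1 + j)) =
    (N.factorial : ℝ) * Real.pi ^ ((N : ℝ) / 2) * 2 ^ (-(N : ℝ) ^ 2) := by
  have hden : ∏ j ∈ Icc 1 (2 * N), Gamma (1 + j) ≠ 0 :=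
    prod_ne_zero_iff.2 fun j _ => (Gamma_pos_of_pos (by positivity)).ne'
  rw [div_eq_iff hden, ← prod_range_succ_mul_sqrt_pi_mul_two_rpow]
  simp only [prod_Icc_one_two_mul_eq_prod_range,
    prod_Icc_one_eq_prod_range (fun j : ℕ => Gamma (1 + 2 * j)), ← prod_mul_distrib,
    Gamma_half_pair_mul_Gamma_eq]

theorem stmt1 (N : ℕ) (hN : 1 ≤ N) :
    ((∏ j ∈ Finset.Icc 1 (2 * N), Real.Gamma (1 + j / 2)) *
        ∏ j ∈ Finset.Icc 1 N, Real.Gamma (1 + 2 * j)) /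
      (∏ j ∈ Finset.Icc 1 (2 * N), Real.Gamma (1 + j)) =
    (N.factorial : ℝ) * Real.pi ^ ((N : ℝ) / 2) * 2 ^ (-(N : ℝ) ^ 2) :=
  stmt1_general N
end

section
/- Let A and B be m×m complex matrices. Then |det(A+B) - det(A)| ≤ m‖B‖ · max(‖A‖, ‖A+B‖)^{m-1}, where ‖·‖ denotes the operator norm. -/
open Matrix

/-! Read column by column, the determinant is an alternating form on Euclidean space which, by
Hadamard's inequality `‖det v‖ ≤ ∏ i, ‖v i‖` (Gram–Schmidt makes the matrix of `v` triangular in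
an orthonormal basis), has norm at most one. Replacing the columns of `A` by those of `A + B` one
at a time therefore changes the determinant by at most
`m * ‖cols B‖ * max ‖cols A‖ ‖cols (A + B)‖ ^ (m - 1)`, with `‖cols M‖` the largest column norm,
and every column of a matrix has norm at most its operator norm. -/

/-- The operator (spectral) norm of a square complex matrix, via its action on
Euclidean space. -/
noncomputable def matOpNorm {m : ℕ} (A : Matrix (Fin m) (Fin m) ℂ) : ℝ :=
  ‖Matrix.toEuclideanCLM (𝕜 := ℂ) A‖

namespace OrthonormalBasis

variable {𝕜 E : Type*} [RCLike 𝕜] [NormedAddCommGroup E] [InnerProductSpace 𝕜 E]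

open InnerProductSpace in
theorem norm_det_le_prod_norm_of_fin {n : ℕ} (e : OrthonormalBasis (Fin n) 𝕜 E) (v : Fin n → E) :
    ‖e.toBasis.det v‖ ≤ ∏ i, ‖v i‖ := by
  have := e.toBasis.finiteDimensional_of_finite
  set b := gramSchmidtOrthonormalBasis (Module.finrank_eq_card_basis e.toBasis) v
  calc ‖e.toBasis.det v‖ = ‖e.toBasis.det b‖ * ‖b.toBasis.det v‖ := by
        rw [← norm_mul, AlternatingMap.eq_smul_basis_det b.toBasis e.toBasis.det]
        simp
    _ = ∏ i, ‖inner 𝕜 (b i) (v i)‖ := by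
        rw [e.det_to_matrix_orthonormalBasis, one_mul, gramSchmidtOrthonormalBasis_det, norm_prod]
    _ ≤ ∏ i, ‖v i‖ := by
        gcongr with i
        simpa using norm_inner_le_norm (𝕜 := 𝕜) (b i) (v i)

theorem norm_det_le_prod_norm {ι : Type*} [Fintype ι] [DecidableEq ι]
    (e : OrthonormalBasis ι 𝕜 E) (v : ι → E) : ‖e.toBasis.det v‖ ≤ ∏ i, ‖v i‖ := by
  set σ := Fintype.equivFin ι
  have h := (e.reindex σ).norm_det_le_prod_norm_of_fin (v ∘ σ.symm)
  rw [reindex_toBasis, Module.Basis.det_reindex, Function.comp_assoc, σ.symm_comp_self,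
    Function.comp_id] at h
  exact h.trans_eq (Fintype.prod_equiv σ.symm _ (fun i => ‖v i‖) fun _ => rfl)

end OrthonormalBasis

namespace Matrix

variable {𝕜 ι : Type*} [RCLike 𝕜]

def euclideanCols {κ : Type*} (M : Matrix ι κ 𝕜) (j : κ) : EuclideanSpace 𝕜 ι :=
  WithLp.toLp 2 fun i => M i j

theorem euclideanCols_sub {κ : Type*} (M N : Matrix ι κ 𝕜) :
    euclideanCols (M - N) = euclideanCols M - euclideanCols N := by
  ext j i
  simp [euclideanCols]

variable [Fintype ι] [DecidableEq ι]

theorem det_eq_basisFun_det_euclideanCols (M : Matrix ι ι 𝕜) :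
    M.det = (EuclideanSpace.basisFun ι 𝕜).toBasis.det M.euclideanCols := by
  rw [Module.Basis.det_apply]
  rfl

theorem euclideanCols_eq_toEuclideanCLM_single (M : Matrix ι ι 𝕜) (j : ι) :
    M.euclideanCols j = toEuclideanCLM (𝕜 := 𝕜) M (EuclideanSpace.single j 1) := by
  ext i
  simp [euclideanCols, mulVec_single]

theorem norm_euclideanCols_le (M : Matrix ι ι 𝕜) :
    ‖M.euclideanCols‖ ≤ ‖toEuclideanCLM (𝕜 := 𝕜) M‖ := by
  refine (pi_norm_le_iff_of_nonneg (norm_nonneg _)).2 fun j => ?_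
  simpa [euclideanCols_eq_toEuclideanCLM_single] using
    (toEuclideanCLM (𝕜 := 𝕜) M).le_opNorm (EuclideanSpace.single j 1)

theorem norm_det_add_sub_det_le (A B : Matrix ι ι 𝕜) :
    ‖(A + B).det - A.det‖ ≤ Fintype.card ι * ‖toEuclideanCLM (𝕜 := 𝕜) B‖ *
      max ‖toEuclideanCLM (𝕜 := 𝕜) A‖ ‖toEuclideanCLM (𝕜 := 𝕜) (A + B)‖ ^ (Fintype.card ι - 1) := by
  have hadamard (v : ι → EuclideanSpace 𝕜 ι) :
      ‖(EuclideanSpace.basisFun ι 𝕜).toBasis.det v‖ ≤ 1 * ∏ i, ‖v i‖ := by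
    simpa using (EuclideanSpace.basisFun ι 𝕜).norm_det_le_prod_norm v
  have key := AlternatingMap.norm_image_sub_le_of_bound _ zero_le_one hadamard
    (A + B).euclideanCols A.euclideanCols
  rw [← euclideanCols_sub, add_sub_cancel_left, ← det_eq_basisFun_det_euclideanCols,
    ← det_eq_basisFun_det_euclideanCols, one_mul, max_comm, mul_right_comm] at key
  refine key.trans ?_
  gcongr
  exacts [norm_euclideanCols_le B, norm_euclideanCols_le A, norm_euclideanCols_le (A + B)]

end Matrix

theorem stmt14 (m : ℕ) (A B : Matrix (Fin m) (Fin m) ℂ) :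
    ‖(A + B).det - A.det‖ ≤
      m * matOpNorm B * max (matOpNorm A) (matOpNorm (A + B)) ^ (m - 1) := by
  simpa [matOpNorm] using norm_det_add_sub_det_le A B
end

section
/- Let A be an m×m complex matrix. Then |det(I+A) - 1| ≤ (m‖A‖_F + 1)^m - 1, where ‖A‖_F = √(Tr(A*A)) is the Frobenius norm. -/
/-!
Subtract `det 1 = 1` term by term in the Leibniz expansion: the term of a permutation `σ` changes
by at most `∏ᵢ (δ + |A|)_{σ i, i} - ∏ᵢ δ_{σ i, i}`, so `|det (1 + A) - 1| ≤ perm (1 + |A|) - 1`.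
The permanent of a nonnegative matrix is at most the product of its column sums, and each column
sum of `1 + |A|` is at most `1 + m ‖A‖_F` because every entry is bounded by the Frobenius norm.
-/

open Matrix

/-- The Frobenius norm `√(Tr(AᴴA))` of a square complex matrix. -/
noncomputable def matFrobNorm {m : ℕ} (A : Matrix (Fin m) (Fin m) ℂ) : ℝ :=
  Real.sqrt ((Matrix.trace (Aᴴ * A)).re)

open Finset

theorem Finset.norm_prod_add_sub_prod_le {ι R : Type*} [NormedCommRing R] [NormOneClass R]
    (s : Finset ι) (x y : ι → R) :
    ‖∏ i ∈ s, (y i + x i) - ∏ i ∈ s, y i‖ ≤ ∏ i ∈ s, (‖y i‖ + ‖x i‖) - ∏ i ∈ s, ‖y i‖ := by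
  classical
  induction s using Finset.induction_on with
  | empty => simp
  | insert a s ha ih =>
    rw [prod_insert ha, prod_insert ha, prod_insert ha, prod_insert ha]
    set P := ∏ i ∈ s, (y i + x i)
    set Q := ∏ i ∈ s, y i
    have hQ : ‖Q‖ ≤ ∏ i ∈ s, ‖y i‖ := norm_prod_le s y
    have hPQ : 0 ≤ ∏ i ∈ s, (‖y i‖ + ‖x i‖) - ∏ i ∈ s, ‖y i‖ := (norm_nonneg _).trans ih
    calc ‖(y a + x a) * P - y a * Q‖ = ‖(y a + x a) * (P - Q) + x a * Q‖ :=
        congrArg norm (by ring)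
      _ ≤ (‖y a‖ + ‖x a‖) * ‖P - Q‖ + ‖x a‖ * ‖Q‖ :=
        norm_add_le_of_le ((norm_mul_le _ _).trans
          (mul_le_mul_of_nonneg_right (norm_add_le _ _) (norm_nonneg _))) (norm_mul_le _ _)
      _ ≤ (‖y a‖ + ‖x a‖) * (∏ i ∈ s, (‖y i‖ + ‖x i‖) - ∏ i ∈ s, ‖y i‖)
          + ‖x a‖ * ∏ i ∈ s, ‖y i‖ := by gcongr
      _ = _ := by ring

namespace Matrix

variable {n : Type*} [Fintype n]

theorem re_trace_conjTranspose_mul_self {m : Type*} [Fintype m] (A : Matrix m n ℂ) :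
    (Aᴴ * A).trace.re = ∑ i, ∑ j, ‖A i j‖ ^ 2 := by
  simp only [trace, diag, mul_apply, conjTranspose_apply, Complex.re_sum, Complex.sq_norm]
  rw [sum_comm]
  refine sum_congr rfl fun i _ => sum_congr rfl fun j _ => ?_
  simp [Complex.normSq_apply, Complex.mul_re]

variable [DecidableEq n]

theorem norm_det_add_sub_det_le_s15 {R : Type*} [NormedCommRing R] [NormOneClass R]
    (A B : Matrix n n R) :
    ‖(B + A).det - B.det‖ ≤
      (B.map (‖·‖) + A.map (‖·‖)).permanent - (B.map (‖·‖)).permanent := by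
  rw [det_apply (B + A), det_apply B, ← sum_sub_distrib, permanent, permanent, ← sum_sub_distrib]
  refine (norm_sum_le _ _).trans (sum_le_sum fun σ _ => ?_)
  rw [← smul_sub, norm_units_zsmul]
  exact norm_prod_add_sub_prod_le univ (fun i => A (σ i) i) (fun i => B (σ i) i)

theorem permanent_le_prod_sum {R : Type*} [CommSemiring R] [PartialOrder R] [IsOrderedRing R]
    (M : Matrix n n R) (hM : ∀ i j, 0 ≤ M i j) :
    M.permanent ≤ ∏ j, ∑ i, M i j := by
  rw [prod_univ_sum, permanent, ← sum_image (s := univ) (g := fun σ : Equiv.Perm n => (σ : n → n))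
    (f := fun f => ∏ i, M (f i) i) fun σ _ τ _ h => Equiv.coe_fn_injective h]
  exact sum_le_sum_of_subset_of_nonneg (by simp) fun f _ _ => prod_nonneg fun i _ => hM _ _

theorem norm_det_one_add_sub_one_le {R : Type*} [NormedCommRing R] [NormOneClass R]
    (A : Matrix n n R) :
    ‖(1 + A).det - 1‖ ≤ (1 + A.map (‖·‖)).permanent - 1 := by
  simpa [Matrix.map_one _ norm_zero norm_one] using norm_det_add_sub_det_le_s15 A 1

end Matrix

theorem norm_entry_le_matFrobNorm {m : ℕ} (A : Matrix (Fin m) (Fin m) ℂ) (i j : Fin m) :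
    ‖A i j‖ ≤ matFrobNorm A := by
  rw [matFrobNorm, re_trace_conjTranspose_mul_self, ← Real.sqrt_sq (norm_nonneg (A i j))]
  refine Real.sqrt_le_sqrt ?_
  calc ‖A i j‖ ^ 2 ≤ ∑ j', ‖A i j'‖ ^ 2 :=
        single_le_sum (f := fun j' => ‖A i j'‖ ^ 2) (fun _ _ => sq_nonneg _) (mem_univ j)
    _ ≤ ∑ i', ∑ j', ‖A i' j'‖ ^ 2 :=
        single_le_sum (f := fun i' => ∑ j', ‖A i' j'‖ ^ 2)
          (fun _ _ => sum_nonneg fun _ _ => sq_nonneg _) (mem_univ i)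

theorem sum_norm_col_le_matFrobNorm {m : ℕ} (A : Matrix (Fin m) (Fin m) ℂ) (j : Fin m) :
    ∑ i, ‖A i j‖ ≤ m * matFrobNorm A := by
  simpa using sum_le_sum fun i (_ : i ∈ univ) => norm_entry_le_matFrobNorm A i j

theorem stmt15 (m : ℕ) (A : Matrix (Fin m) (Fin m) ℂ) :
    ‖(1 + A).det - 1‖ ≤ (m * matFrobNorm A + 1) ^ m - 1 := by
  set C : Matrix (Fin m) (Fin m) ℝ := 1 + A.map (‖·‖)
  have hC : ∀ i j, 0 ≤ C i j := fun i j => by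
    simp only [C, Matrix.add_apply, map_apply, one_apply]; positivity
  have hcol : ∀ j, ∑ i, C i j = 1 + ∑ i, ‖A i j‖ := fun j => by
    simp [C, sum_add_distrib, one_apply]
  calc ‖(1 + A).det - 1‖ ≤ C.permanent - 1 := norm_det_one_add_sub_one_le A
    _ ≤ ∏ j, ∑ i, C i j - 1 := by gcongr; exact permanent_le_prod_sum C hC
    _ ≤ ∏ _j : Fin m, (m * matFrobNorm A + 1) - 1 := by
      gcongr with j
      · exact fun j _ => sum_nonneg fun i _ => hC i j
      · linarith [hcol j, sum_norm_col_le_matFrobNorm A j]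
    _ = (m * matFrobNorm A + 1) ^ m - 1 := by simp
end
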